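/- arXiv:2108.13469 — 3 statements merged into one kernel-verified Lean document; each statement's English description precedes it below -/
import Mathlib

section
/- Let V be a finite-dimensional vector space with two complete flags of subspaces. Given an (r+1)-dimensional subspace with prescribed distinct vanishing orders u_0<...<u_r with respect to the first flag and v_0>...>v_r with respect to the second, there exists a basis s_0,...,s_r of the subspace and a permutation σ of {0,...,r} such that s_j has vanishing order exactly u_j in the first flag and exactly v_{σ(j)} in the second flag. (Abstract version of Lemma on vanishing at two points: given a basis realizing the orders u_j at the first flag, finitely many elementary row operations produce a basis whose second-flag orders are all distinct.) -/
/-!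
Vectors vanishing to pairwise distinct orders along a filtration are linearly independent, so
vectors `t j ∈ W` of exact `F`-order `u j` (which exist by assumption) form a basis of `W`.
The spaces `W ⊓ G (v j)` form a strictly increasing chain of `r + 1` subspaces of the
`(r + 1)`-dimensional `W`, hence `W ⊓ G (v m + 1)` has codimension at most one in
`W ⊓ G (v m)`: for two vectors `s i`, `s j` of the same `G`-order `v m`, some `s i - c • s j`
vanishes to higher order along `G`. When `i < j` this row operation keeps the `F`-order `u i`
of `s i`, since `s j` vanishes to order `u j > u i` along `F`. A tuple of this shape minimising
the sum of the indices of its `G`-orders therefore has pairwise distinct `G`-orders.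
-/

open Module Finset Function

section

variable {K V : Type*} [Field K] [AddCommGroup V] [Module K V]

def HasVanishingOrder (F : ℕ → Submodule K V) (x : V) (n : ℕ) : Prop :=
  x ∈ F n ∧ x ∉ F (n + 1)

namespace HasVanishingOrder

variable {F : ℕ → Submodule K V} {x y : V} {m n : ℕ}

theorem ne_zero (h : HasVanishingOrder F x n) : x ≠ 0 := by
  rintro rfl
  exact h.2 (zero_mem _)

theorem mem_iff (hF : Antitone F) (h : HasVanishingOrder F x n) : x ∈ F m ↔ m ≤ n :=
  ⟨fun hm => by_contra fun hlt => h.2 (hF (not_le.1 hlt) hm), fun hm => hF hm h.1⟩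

theorem sub_smul (hF : Antitone F) (h : HasVanishingOrder F x n) (hy : y ∈ F (n + 1)) (c : K) :
    HasVanishingOrder F (x - c • y) n := by
  refine ⟨sub_mem h.1 (Submodule.smul_mem _ c (hF n.le_succ hy)), fun hxy => h.2 ?_⟩
  simpa using add_mem hxy (Submodule.smul_mem _ c hy)

end HasVanishingOrder

theorem linearIndependent_of_hasVanishingOrder {ι : Type*} {F : ℕ → Submodule K V}
    (hF : Antitone F) {s : ι → V} {u : ι → ℕ} (hu : Injective u)
    (hs : ∀ i, HasVanishingOrder F (s i) (u i)) : LinearIndependent K s := by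
  classical
  rw [linearIndependent_iff']
  intro t g hsum i hi
  by_contra hgi
  obtain ⟨i₀, hi₀, hmin⟩ := (t.filter (g · ≠ 0)).exists_min_image u ⟨i, by simp [hi, hgi]⟩
  rw [mem_filter] at hi₀
  have hrest : ∑ k ∈ t.erase i₀, g k • s k ∈ F (u i₀ + 1) := by
    refine sum_mem fun k hk => ?_
    by_cases hgk : g k = 0
    · simp [hgk]
    have hlt : u i₀ < u k := (hmin k (by simp [(mem_erase.1 hk).2, hgk])).lt_of_ne
      (hu.ne (mem_erase.1 hk).1.symm)
    exact Submodule.smul_mem _ _ (hF hlt (hs k).1)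
  rw [← add_sum_erase t _ hi₀.1, add_eq_zero_iff_eq_neg] at hsum
  exact (hs i₀).2 ((Submodule.smul_mem_iff _ hi₀.2).1 (hsum ▸ neg_mem hrest))

theorem StrictMono.apply_add_sub_le {n : ℕ} {f : Fin n → ℕ} (hf : StrictMono f) {i j : Fin n}
    (hij : i ≤ j) : f i + (j - i : ℕ) ≤ f j := by
  obtain ⟨k, hk⟩ := Nat.exists_eq_add_of_le (Fin.le_def.1 hij)
  induction k generalizing j with
  | zero => simp [Fin.ext hk]
  | succ k ih =>
    let j' : Fin n := ⟨i + k, by omega⟩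
    have h₁ : f i + k ≤ f j' := by simpa [j'] using ih (j := j') (Fin.le_def.2 (by simp [j'])) rfl
    have h₂ : f j' < f j := hf (Fin.lt_def.2 (by simp only [j']; omega))
    omega

theorem Submodule.exists_sub_smul_mem_of_finrank_le_succ {A B : Submodule K V}
    [FiniteDimensional K A] (hBA : B ≤ A) (hrank : finrank K A ≤ finrank K B + 1) {x y : V}
    (hx : x ∈ A) (hy : y ∈ A) (hyB : y ∉ B) : ∃ c : K, x - c • y ∈ B := by
  have hle : B ⊔ K ∙ y ≤ A := sup_le hBA ((span_singleton_le_iff_mem y A).2 hy)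
  have hlt : B < B ⊔ K ∙ y := left_lt_sup.2 fun h => hyB (h (mem_span_singleton_self y))
  have : FiniteDimensional K ↥(B ⊔ K ∙ y) := finiteDimensional_of_le hle
  have hBy : B ⊔ K ∙ y = A := eq_of_le_of_finrank_le hle <| by
    have := finrank_lt_finrank_of_lt hlt
    omega
  obtain ⟨b, hb, z, hz, hbz⟩ := mem_sup.1 (hBy ▸ hx)
  obtain ⟨c, rfl⟩ := mem_span_singleton.1 hz
  exact ⟨c, by rwa [← hbz, add_sub_cancel_right]⟩

theorem Submodule.inf_lt_inf_of_hasVanishingOrder {F : ℕ → Submodule K V} (hF : Antitone F)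
    {W : Submodule K V} {a b : ℕ} (hab : a < b) {s : V} (hsW : s ∈ W)
    (hs : HasVanishingOrder F s a) : W ⊓ F b < W ⊓ F a :=
  SetLike.lt_iff_le_and_exists.2
    ⟨inf_le_inf_left W (hF hab.le), s, mem_inf.2 ⟨hsW, hs.1⟩,
      fun h => hs.2 (hF hab (mem_inf.1 h).2)⟩

theorem finrank_inf_le_finrank_inf_succ_add_one {G : ℕ → Submodule K V} (hG : Antitone G)
    {r : ℕ} {W : Submodule K V} [FiniteDimensional K W] (hW : finrank K W = r + 1)
    {v : Fin (r + 1) → ℕ} (hv : StrictAnti v)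
    (hreG : ∀ j, ∃ s ∈ W, HasVanishingOrder G s (v j)) (m : Fin (r + 1)) :
    finrank K ↥(W ⊓ G (v m)) ≤ finrank K ↥(W ⊓ G (v m + 1)) + 1 := by
  have hlt : ∀ {b : ℕ} (j : Fin (r + 1)), v j < b →
      finrank K ↥(W ⊓ G b) < finrank K ↥(W ⊓ G (v j)) := fun j hb => by
    obtain ⟨s, hsW, hs⟩ := hreG j
    exact Submodule.finrank_lt_finrank_of_lt
      (Submodule.inf_lt_inf_of_hasVanishingOrder hG hb hsW hs)
  have hD : StrictMono fun j => finrank K ↥(W ⊓ G (v j)) := fun i j hij => hlt j (hv hij)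
  have hupper : finrank K ↥(W ⊓ G (v m)) ≤ m + 1 := by
    have hchain := hD.apply_add_sub_le (Fin.le_last m)
    have hle := Submodule.finrank_mono (inf_le_left : W ⊓ G (v (Fin.last r)) ≤ W)
    simp only [Fin.val_last] at hchain
    have := m.is_le
    omega
  cases m using Fin.cases with
  | zero =>
    simp only [Fin.val_zero] at hupper
    omega
  | succ k =>
    have h0 := hlt 0 (lt_add_one (v 0))
    have hchain := hD.apply_add_sub_le (Fin.zero_le k.castSucc)
    have hk := Submodule.finrank_mono (inf_le_inf_left W (hG (hv k.castSucc_lt_succ)) :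
      W ⊓ G (v k.castSucc) ≤ W ⊓ G (v k.succ + 1))
    simp only [Fin.val_succ, Fin.val_castSucc, Fin.val_zero] at hupper hchain ⊢
    omega

open scoped Classical in
/-- The index `m` with `x` of `G`-order `v m`, computed as a count so that it is defined for every
`x` and can serve as a termination measure. -/
noncomputable def orderIndex (G : ℕ → Submodule K V) {n : ℕ} (v : Fin n → ℕ) (x : V) : ℕ :=
  #{j | x ∉ G (v j)}

theorem orderIndex_eq {G : ℕ → Submodule K V} (hG : Antitone G) {n : ℕ} {v : Fin n → ℕ}
    (hv : StrictAnti v) {x : V} {m : Fin n} (h : HasVanishingOrder G x (v m)) :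
    orderIndex G v x = m := by
  classical
  have : ({j | x ∉ G (v j)} : Finset (Fin n)) = Iio m := by
    ext j
    simp [h.mem_iff hG, hv.le_iff_ge]
  rw [orderIndex, ← Fin.card_Iio, ← this]

theorem exists_sum_orderIndex_lt {F G : ℕ → Submodule K V} (hF : Antitone F) (hG : Antitone G)
    {n : ℕ} {W : Submodule K V} [FiniteDimensional K W] {u v : Fin n → ℕ} (hu : StrictMono u)
    (hv : StrictAnti v) (hordG : ∀ s ∈ W, s ≠ 0 → ∃ j, HasVanishingOrder G s (v j))
    (hrank : ∀ m, finrank K ↥(W ⊓ G (v m)) ≤ finrank K ↥(W ⊓ G (v m + 1)) + 1)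
    {s : Fin n → V} (hsW : ∀ k, s k ∈ W) (hsF : ∀ k, HasVanishingOrder F (s k) (u k))
    {i j : Fin n} (hij : i < j) (hsame : orderIndex G v (s i) = orderIndex G v (s j)) :
    ∃ s' : Fin n → V, (∀ k, s' k ∈ W) ∧ (∀ k, HasVanishingOrder F (s' k) (u k)) ∧
      ∑ k, orderIndex G v (s' k) < ∑ k, orderIndex G v (s k) := by
  obtain ⟨m, hsi⟩ := hordG (s i) (hsW i) (hsF i).ne_zero
  obtain ⟨m', hsj⟩ := hordG (s j) (hsW j) (hsF j).ne_zero
  obtain rfl : m = m' := by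
    rw [orderIndex_eq hG hv hsi, orderIndex_eq hG hv hsj] at hsame
    exact Fin.ext hsame
  obtain ⟨c, hc⟩ := Submodule.exists_sub_smul_mem_of_finrank_le_succ
    (inf_le_inf_left W (hG (v m).le_succ)) (hrank m)
    (Submodule.mem_inf.2 ⟨hsW i, hsi.1⟩) (Submodule.mem_inf.2 ⟨hsW j, hsj.1⟩)
    fun h => hsj.2 (Submodule.mem_inf.1 h).2
  rw [Submodule.mem_inf] at hc
  set x := s i - c • s j
  have hxF : HasVanishingOrder F x (u i) := (hsF i).sub_smul hF (hF (hu hij) (hsF j).1) c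
  have hxlt : orderIndex G v x < orderIndex G v (s i) := by
    obtain ⟨m'', hx⟩ := hordG x hc.1 hxF.ne_zero
    rw [orderIndex_eq hG hv hx, orderIndex_eq hG hv hsi, Fin.val_fin_lt, ← hv.lt_iff_gt]
    exact (hx.mem_iff hG).1 hc.2
  refine ⟨update s i x, (forall_update_iff s fun _ y => y ∈ W).2 ⟨hc.1, fun k _ => hsW k⟩,
    (forall_update_iff s fun k y => HasVanishingOrder F y (u k)).2 ⟨hxF, fun k _ => hsF k⟩, ?_⟩
  refine sum_lt_sum (fun k _ => ?_) ⟨i, mem_univ i, by simpa using hxlt⟩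
  rcases eq_or_ne k i with rfl | hk
  · simpa using hxlt.le
  · simp [hk]

theorem exists_adapted_to_both_flags {F G : ℕ → Submodule K V} (hF : Antitone F)
    (hG : Antitone G) {n : ℕ} {W : Submodule K V} [FiniteDimensional K W]
    {u v : Fin n → ℕ} (hu : StrictMono u) (hv : StrictAnti v)
    (hordG : ∀ s ∈ W, s ≠ 0 → ∃ j, HasVanishingOrder G s (v j))
    (hrank : ∀ m, finrank K ↥(W ⊓ G (v m)) ≤ finrank K ↥(W ⊓ G (v m + 1)) + 1)
    (hreF : ∀ j, ∃ s ∈ W, HasVanishingOrder F s (u j)) :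
    ∃ (s : Fin n → V) (σ : Equiv.Perm (Fin n)), (∀ k, s k ∈ W) ∧
      (∀ k, HasVanishingOrder F (s k) (u k)) ∧ ∀ k, HasVanishingOrder G (s k) (v (σ k)) := by
  choose t htW htF using hreF
  obtain ⟨s, ⟨hsW, hsF⟩, hmin⟩ :=
    (measure fun s : Fin n → V => ∑ k, orderIndex G v (s k)).wf.has_min
      {s | (∀ k, s k ∈ W) ∧ ∀ k, HasVanishingOrder F (s k) (u k)} ⟨t, htW, htF⟩
  choose σ hσ using fun k => hordG (s k) (hsW k) (hsF k).ne_zero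
  have hσ_inj : Injective σ := Injective.of_lt_imp_ne fun i j hij hσij => by
    obtain ⟨s', hs'W, hs'F, hlt⟩ := exists_sum_orderIndex_lt hF hG hu hv hordG hrank hsW hsF hij
      (by rw [orderIndex_eq hG hv (hσ i), orderIndex_eq hG hv (hσ j), hσij])
    exact hmin s' ⟨hs'W, hs'F⟩ hlt
  exact ⟨s, Equiv.ofBijective σ hσ_inj.bijective_of_finite, hsW, hsF, hσ⟩

end

theorem stmt0_general {K V : Type*} [Field K] [AddCommGroup V] [Module K V]
    (F G : ℕ → Submodule K V) (hF : Antitone F) (hG : Antitone G)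
    (r : ℕ) (W : Submodule K V) (hW : Module.finrank K W = r + 1)
    (u v : Fin (r + 1) → ℕ)
    (hu : StrictMono u) (hv : StrictAnti v)
    (hordG : ∀ s ∈ W, s ≠ 0 → ∃ j, s ∈ G (v j) ∧ s ∉ G (v j + 1))
    (hreF : ∀ j, ∃ s ∈ W, s ∈ F (u j) ∧ s ∉ F (u j + 1))
    (hreG : ∀ j, ∃ s ∈ W, s ∈ G (v j) ∧ s ∉ G (v j + 1)) :
    ∃ (s : Fin (r + 1) → V) (σ : Equiv.Perm (Fin (r + 1))),
      (∀ j, s j ∈ W) ∧ LinearIndependent K s ∧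
      Submodule.span K (Set.range s) = W ∧
      (∀ j, s j ∈ F (u j) ∧ s j ∉ F (u j + 1)) ∧
      (∀ j, s j ∈ G (v (σ j)) ∧ s j ∉ G (v (σ j) + 1)) := by
  have : FiniteDimensional K W := Module.finite_of_finrank_eq_succ hW
  obtain ⟨s, σ, hsW, hsF, hsG⟩ := exists_adapted_to_both_flags hF hG hu hv hordG
    (finrank_inf_le_finrank_inf_succ_add_one hG hW hv hreG) hreF
  have hli : LinearIndependent K s := linearIndependent_of_hasVanishingOrder hF hu.injective hsF
  refine ⟨s, σ, hsW, hli, ?_, hsF, hsG⟩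
  refine Submodule.eq_of_le_of_finrank_le (Submodule.span_le.2 (Set.range_subset_iff.2 hsW)) ?_
  rw [hW, finrank_span_eq_card hli, Fintype.card_fin]

/-- Abstract two-flag version of the lemma on vanishing at two points:
given an `(r+1)`-dimensional subspace `W` whose vanishing orders with respect to
a first flag `F` are `u₀ < ... < u_r` and with respect to a second flag `G` are
`v₀ > ... > v_r`, there is a basis `s₀,...,s_r` of `W` and a permutation `σ`
with `ord_F (s j) = u j` and `ord_G (s j) = v (σ j)`. -/
theorem stmt0 {K V : Type*} [Field K] [AddCommGroup V] [Module K V]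
    [FiniteDimensional K V]
    (F G : ℕ → Submodule K V) (hF : Antitone F) (hG : Antitone G)
    (r : ℕ) (W : Submodule K V) (hW : Module.finrank K W = r + 1)
    (u v : Fin (r + 1) → ℕ)
    (hu : StrictMono u) (hv : StrictAnti v)
    (hordF : ∀ s ∈ W, s ≠ 0 → ∃ j, s ∈ F (u j) ∧ s ∉ F (u j + 1))
    (hordG : ∀ s ∈ W, s ≠ 0 → ∃ j, s ∈ G (v j) ∧ s ∉ G (v j + 1))
    (hreF : ∀ j, ∃ s ∈ W, s ∈ F (u j) ∧ s ∉ F (u j + 1))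
    (hreG : ∀ j, ∃ s ∈ W, s ∈ G (v j) ∧ s ∉ G (v j + 1)) :
    ∃ (s : Fin (r + 1) → V) (σ : Equiv.Perm (Fin (r + 1))),
      (∀ j, s j ∈ W) ∧ LinearIndependent K s ∧
      Submodule.span K (Set.range s) = W ∧
      (∀ j, s j ∈ F (u j) ∧ s j ∉ F (u j + 1)) ∧
      (∀ j, s j ∈ G (v (σ j)) ∧ s j ∉ G (v (σ j) + 1)) :=
  stmt0_general F G hF hG r W hW u v hu hv hordG hreF hreG
end

section
/- Let C be an elliptic curve with points P, Q such that P-Q is non-torsion, and integers 0 ≤ u_0 < ... < u_r ≤ d, d ≥ v_0 > ... > v_r ≥ 0. A necessary condition for existence of a line bundle L of degree d and an (r+1)-dimensional space V ⊆ H^0(L) with dim V(-u_jP) ≥ j+1 and dim V(-v_jQ) ≥ r+1-j for all j is: u_j + v_j ≤ d for all j, with equality for at most one j. -/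
/-! The subspaces `V(-u_j P)` and `V(-v_j Q)` have dimensions summing to more than `dim V`, so
they meet nontrivially, giving a nonzero section of `L(-u_j P - v_j Q)`. Hence this bundle has
nonnegative degree, i.e. `u_j + v_j ≤ d`, and in case of equality it is trivial, i.e.
`L = O(u_j P + v_j Q)`. Two such indices would make a nonzero multiple of `P - Q` vanish. -/

theorem finrank_inf_add_finrank_inf_le {K H : Type*} [DivisionRing K] [AddCommGroup H]
    [Module K H] [FiniteDimensional K H] (V A B : Submodule K H) :
    Module.finrank K ↥(V ⊓ A) + Module.finrank K ↥(V ⊓ B) ≤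
      Module.finrank K V + Module.finrank K ↥(A ⊓ B) := by
  rw [← Submodule.finrank_sup_add_finrank_inf_eq]
  exact add_le_add (Submodule.finrank_mono (sup_le inf_le_left inf_le_left))
    (Submodule.finrank_mono (inf_le_inf inf_le_right inf_le_right))

theorem sub_smul_sub_eq_zero_of_smul_add_smul_eq {G : Type*} [AddCommGroup G] {P Q : G}
    {a b a' b' : ℤ} (h : a • P + b • Q = a' • P + b' • Q) (hab : a + b = a' + b') :
    (a - a') • (P - Q) = 0 := by
  obtain rfl : b' = a - a' + b := by omega
  linear_combination (norm := module) h

theorem stmt5_general {K H Pic : Type*} [Field K] [AddCommGroup H] [Module K H]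
    [FiniteDimensional K H] [AddCommGroup Pic]
    (deg : Pic →+ ℤ) (h0 : Pic → ℕ)
    (hneg : ∀ M : Pic, deg M < 0 → h0 M = 0)
    (hzero : ∀ M : Pic, deg M = 0 → ((M = 0 → h0 M = 1) ∧ (M ≠ 0 → h0 M = 0)))
    (OP OQ : Pic) (hP : deg OP = 1) (hQ : deg OQ = 1)
    (hnt : ∀ n : ℤ, n ≠ 0 → n • (OP - OQ) ≠ 0)
    (d r : ℕ) (L : Pic) (hL : deg L = d)
    (FP FQ : ℕ → Submodule K H)
    (hdim : ∀ m n : ℕ,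
      Module.finrank K ↥(FP m ⊓ FQ n) ≤ h0 (L - (m : ℤ) • OP - (n : ℤ) • OQ))
    (u v : Fin (r + 1) → ℕ)
    (hu : StrictMono u)
    (V : Submodule K H) (hVdim : Module.finrank K V = r + 1)
    (hVP : ∀ j : Fin (r + 1), (j : ℕ) + 1 ≤ Module.finrank K ↥(V ⊓ FP (u j)))
    (hVQ : ∀ j : Fin (r + 1), r + 1 - (j : ℕ) ≤ Module.finrank K ↥(V ⊓ FQ (v j))) :
    (∀ j, u j + v j ≤ d) ∧
    (∀ j₁ j₂, u j₁ + v j₁ = d → u j₂ + v j₂ = d → j₁ = j₂) := by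
  have hsec : ∀ j, 0 < h0 (L - (u j : ℤ) • OP - (v j : ℤ) • OQ) := fun j => by
    have := finrank_inf_add_finrank_inf_le V (FP (u j)) (FQ (v j))
    have := hVP j
    have := hVQ j
    have := hdim (u j) (v j)
    omega
  have hdeg : ∀ j, deg (L - (u j : ℤ) • OP - (v j : ℤ) • OQ) = d - u j - v j := by
    simp [hL, hP, hQ]
  have hle : ∀ j, u j + v j ≤ d := fun j => by
    have := hdeg j ▸ mt (hneg _) (hsec j).ne'
    omega
  refine ⟨hle, fun j₁ j₂ h₁ h₂ => ?_⟩
  have hL_eq : ∀ j, u j + v j = d → L = (u j : ℤ) • OP + (v j : ℤ) • OQ := fun j hj => by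
    have := mt ((hzero _ (by rw [hdeg]; omega)).2) (hsec j).ne'
    rwa [not_not, sub_sub, sub_eq_zero] at this
  by_contra hne
  exact hnt _ (sub_ne_zero.2 (Nat.cast_injective.ne (hu.injective.ne hne)))
    (sub_smul_sub_eq_zero_of_smul_add_smul_eq ((hL_eq j₁ h₁).symm.trans (hL_eq j₂ h₂))
      (by omega))

/-- Necessary condition for existence of a linear series on an elliptic curve
with prescribed vanishing at two points `P, Q` with `P - Q` non-torsion:
`u_j + v_j ≤ d` for all `j`, with equality for at most one `j`.
The elliptic curve is modelled by its Picard group `Pic` with degree `deg` and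
a function `h0` computing dimensions of spaces of sections; the flags
`FP, FQ` of subspaces of sections vanishing at `P, Q` are tied to `h0`. -/
theorem stmt5 {K H Pic : Type*} [Field K] [AddCommGroup H] [Module K H]
    [FiniteDimensional K H] [AddCommGroup Pic]
    (deg : Pic →+ ℤ) (h0 : Pic → ℕ)
    (hneg : ∀ M : Pic, deg M < 0 → h0 M = 0)
    (hzero : ∀ M : Pic, deg M = 0 → ((M = 0 → h0 M = 1) ∧ (M ≠ 0 → h0 M = 0)))
    (OP OQ : Pic) (hP : deg OP = 1) (hQ : deg OQ = 1)
    (hnt : ∀ n : ℤ, n ≠ 0 → n • (OP - OQ) ≠ 0)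
    (d r : ℕ) (L : Pic) (hL : deg L = d)
    (FP FQ : ℕ → Submodule K H)
    (hdim : ∀ m n : ℕ,
      Module.finrank K ↥(FP m ⊓ FQ n) ≤ h0 (L - (m : ℤ) • OP - (n : ℤ) • OQ))
    (u v : Fin (r + 1) → ℕ)
    (hu : StrictMono u) (hv : StrictAnti v)
    (hur : u (Fin.last r) ≤ d) (hv0 : v 0 ≤ d)
    (V : Submodule K H) (hVdim : Module.finrank K V = r + 1)
    (hVP : ∀ j : Fin (r + 1), (j : ℕ) + 1 ≤ Module.finrank K ↥(V ⊓ FP (u j)))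
    (hVQ : ∀ j : Fin (r + 1), r + 1 - (j : ℕ) ≤ Module.finrank K ↥(V ⊓ FQ (v j))) :
    (∀ j, u j + v j ≤ d) ∧
    (∀ j₁ j₂, u j₁ + v j₁ = d → u j₂ + v j₂ = d → j₁ = j₂) :=
  stmt5_general deg h0 hneg hzero OP OQ hP hQ hnt d r L hL FP FQ hdim u v hu V hVdim hVP hVQ
end

section
/- In an admissible filling of a skew shape, for each i the threshold rows satisfy L_j^i ≤ L_j^{i-1} + 1 for every column j, and for fixed i, equality L_j^i = L_j^{i-1} + 1 holds for at most one j. Consequently the vanishing orders u_j^i = j+i-1-L_j^{i-1} and v_j^i = d - u_j^{i+1} satisfy u_j^i + v_j^i ≤ d, with equality for at most one j for each fixed i. -/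
/-!
Passing from `w^{i-1}` to `w^i` adds the entries of row `i` column by column. A column weight is
an antitone `0/1`-function of the row, so in column `j` the thresholds `L^{i-1} ≤ b < L^i` are
exactly the rows where `w^{i-1}` vanishes while `w^i` equals one, i.e. where the added entry is
`+1`. Since `+1` occurs at most once, `L^i ≤ L^{i-1} + 1`, and equality in column `j` pins that
single `+1` to column `j`. The claims on `u` and `v` follow from
`u_j^i + v_j^i = d - 1 + L_j^i - L_j^{i-1}`.
-/

section Threshold

variable {f g e : ℤ → ℤ} {L L' : ℤ}

theorem increment_eq_one_of_mem_Ico (hf : Antitone f) (hg : Antitone g)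
    (hf_nonneg : ∀ b, 0 ≤ f b) (hg_le_one : ∀ b, g b ≤ 1) (hfge : ∀ b, g b = f b + e b)
    (hfL : f L = 0) (hgL' : g (L' - 1) = 1) {b : ℤ} (hb : b ∈ Set.Ico L L') : e b = 1 := by
  have hfb : f b ≤ f L := hf hb.1
  have hgb : g (L' - 1) ≤ g b := hg (by linarith [hb.2])
  linarith [hfge b, hf_nonneg b, hg_le_one b]

theorem threshold_le_add_one (hf : Antitone f) (hg : Antitone g)
    (hf_nonneg : ∀ b, 0 ≤ f b) (hg_le_one : ∀ b, g b ≤ 1) (hfge : ∀ b, g b = f b + e b)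
    (hfL : f L = 0) (hgL' : g (L' - 1) = 1)
    (he : ∀ b₁ b₂, e b₁ = 1 → e b₂ = 1 → b₁ = b₂) : L' ≤ L + 1 := by
  by_contra! h
  have hL := he L (L + 1)
    (increment_eq_one_of_mem_Ico hf hg hf_nonneg hg_le_one hfge hfL hgL' ⟨le_rfl, by omega⟩)
    (increment_eq_one_of_mem_Ico hf hg hf_nonneg hg_le_one hfge hfL hgL' ⟨by omega, by omega⟩)
  omega

end Threshold

theorem stmt7_general (r : ℕ) (d : ℤ)
    (entry : ℕ → Fin (r + 1) → ℤ → ℤ)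
    (ha : ∀ i (j₁ j₂ : Fin (r + 1)) (b₁ b₂ : ℤ),
      entry i j₁ b₁ = 1 → entry i j₂ b₂ = 1 → j₁ = j₂ ∧ b₁ = b₂)
    (w : ℕ → Fin (r + 1) → ℤ → ℤ)
    (hw : ∀ i j b, w (i + 1) j b = w i j b + entry (i + 1) j b)
    (hw01 : ∀ i j b, w i j b = 0 ∨ w i j b = 1)
    (hbelow : ∀ i j b, w i j (b + 1) ≤ w i j b)
    (L : ℕ → Fin (r + 1) → ℤ)
    (hL : ∀ i j, w i j (L i j) = 0 ∧ w i j (L i j - 1) = 1)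
    (u v : ℕ → Fin (r + 1) → ℤ)
    (hu : ∀ i j, u i j = (j : ℤ) + i - 1 - L (i - 1) j)
    (hv : ∀ i j, v i j = d - u (i + 1) j) :
    ∀ i, 1 ≤ i →
      ((∀ j, L i j ≤ L (i - 1) j + 1) ∧
        (∀ j₁ j₂, L i j₁ = L (i - 1) j₁ + 1 → L i j₂ = L (i - 1) j₂ + 1 → j₁ = j₂)) ∧
      ((∀ j, u i j + v i j ≤ d) ∧
        (∀ j₁ j₂, u i j₁ + v i j₁ = d → u i j₂ + v i j₂ = d → j₁ = j₂)) := by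
  intro i hi
  obtain ⟨k, rfl⟩ := Nat.exists_eq_add_of_le' hi
  simp only [Nat.add_sub_cancel]
  have hanti : ∀ i j, Antitone (w i j) := fun i j => antitone_int_of_succ_le (hbelow i j)
  have hnonneg : ∀ i j b, 0 ≤ w i j b := fun i j b => by rcases hw01 i j b with h | h <;> omega
  have hle_one : ∀ i j b, w i j b ≤ 1 := fun i j b => by rcases hw01 i j b with h | h <;> omega
  have hle : ∀ j, L (k + 1) j ≤ L k j + 1 := fun j =>
    threshold_le_add_one (hanti k j) (hanti (k + 1) j) (hnonneg k j) (hle_one (k + 1) j)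
      (hw k j) (hL k j).1 (hL (k + 1) j).2 fun b₁ b₂ h₁ h₂ => (ha (k + 1) j j b₁ b₂ h₁ h₂).2
  have hentry : ∀ j, L (k + 1) j = L k j + 1 → entry (k + 1) j (L k j) = 1 := fun j hj =>
    increment_eq_one_of_mem_Ico (hanti k j) (hanti (k + 1) j) (hnonneg k j) (hle_one (k + 1) j)
      (hw k j) (hL k j).1 (hL (k + 1) j).2 ⟨le_rfl, by omega⟩
  have huniq : ∀ j₁ j₂, L (k + 1) j₁ = L k j₁ + 1 → L (k + 1) j₂ = L k j₂ + 1 → j₁ = j₂ :=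
    fun j₁ j₂ h₁ h₂ => (ha (k + 1) j₁ j₂ _ _ (hentry j₁ h₁) (hentry j₂ h₂)).1
  have hsum : ∀ j, u (k + 1) j + v (k + 1) j = d - 1 + L (k + 1) j - L k j := fun j => by
    rw [hv, hu, hu]
    simp only [Nat.add_sub_cancel, Nat.cast_add, Nat.cast_one]
    ring
  refine ⟨⟨hle, huniq⟩, fun j => ?_, fun j₁ j₂ h₁ h₂ => huniq j₁ j₂ ?_ ?_⟩
  · linarith [hsum j, hle j]
  · linarith [hsum j₁]
  · linarith [hsum j₂]

/-- In an admissible filling, the thresholds satisfy `L_j^i ≤ L_j^{i-1} + 1`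
with equality for at most one column `j` (for each fixed `i`); consequently
the vanishing orders `u_j^i = j+i-1-L_j^{i-1}`, `v_j^i = d - u_j^{i+1}` satisfy
`u_j^i + v_j^i ≤ d` with equality for at most one `j`. -/
theorem stmt7 (g r : ℕ) (d : ℤ)
    (entry : ℕ → Fin (r + 1) → ℤ → ℤ)
    (hentry : ∀ i j b, entry i j b = -1 ∨ entry i j b = 0 ∨ entry i j b = 1)
    (ha : ∀ i (j₁ j₂ : Fin (r + 1)) (b₁ b₂ : ℤ),
      entry i j₁ b₁ = 1 → entry i j₂ b₂ = 1 → j₁ = j₂ ∧ b₁ = b₂)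
    (w : ℕ → Fin (r + 1) → ℤ → ℤ)
    (hw : ∀ i j b, w (i + 1) j b = w i j b + entry (i + 1) j b)
    (hw01 : ∀ i j b, w i j b = 0 ∨ w i j b = 1)
    (hbelow : ∀ i j b, w i j (b + 1) ≤ w i j b)
    (L : ℕ → Fin (r + 1) → ℤ)
    (hL : ∀ i j, w i j (L i j) = 0 ∧ w i j (L i j - 1) = 1)
    (u v : ℕ → Fin (r + 1) → ℤ)
    (hu : ∀ i j, u i j = (j : ℤ) + i - 1 - L (i - 1) j)
    (hv : ∀ i j, v i j = d - u (i + 1) j) :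
    ∀ i, 1 ≤ i →
      ((∀ j, L i j ≤ L (i - 1) j + 1) ∧
        (∀ j₁ j₂, L i j₁ = L (i - 1) j₁ + 1 → L i j₂ = L (i - 1) j₂ + 1 → j₁ = j₂)) ∧
      ((∀ j, u i j + v i j ≤ d) ∧
        (∀ j₁ j₂, u i j₁ + v i j₁ = d → u i j₂ + v i j₂ = d → j₁ = j₂)) :=
  stmt7_general r d entry ha w hw hw01 hbelow L hL u v hu hv
end
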